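/- arXiv:2303.09723 — 12 statements merged into one kernel-verified Lean document; each statement's English description precedes it below -/
import Mathlib

section
/- For all positive rationals R and S, the triangles with sides a₁ = (R²+1)(S²+S+1), b₁ = S(S+1)(R²+S²+S+1), c₁ = R² + (S²+S+1)² and a₂ = (R²+S²)(S²+S+1), b₂ = (S+1)(R²+S²+S+1), c₂ = R²S² + (S²+S+1)² have the same perimeter and the same squared area, i.e., a₁+b₁+c₁ = a₂+b₂+c₂ and (a₁+b₁+c₁)(−a₁+b₁+c₁)(a₁−b₁+c₁)(a₁+b₁−c₁) = (a₂+b₂+c₂)(−a₂+b₂+c₂)(a₂−b₂+c₂)(a₂+b₂−c₂). -/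
/-- Choudhry's parametric pair of rational triangles with equal perimeter and equal
(squared) area. -/
theorem stmt1 (R S : ℚ) (hR : 0 < R) (hS : 0 < S) :
    ((R^2+1)*(S^2+S+1) + S*(S+1)*(R^2+S^2+S+1) + (R^2 + (S^2+S+1)^2)
      = (R^2+S^2)*(S^2+S+1) + (S+1)*(R^2+S^2+S+1) + (R^2*S^2 + (S^2+S+1)^2)) ∧
    (let a₁ := (R^2+1)*(S^2+S+1); let b₁ := S*(S+1)*(R^2+S^2+S+1);
     let c₁ := R^2 + (S^2+S+1)^2;
     let a₂ := (R^2+S^2)*(S^2+S+1); let b₂ := (S+1)*(R^2+S^2+S+1);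
     let c₂ := R^2*S^2 + (S^2+S+1)^2;
     (a₁+b₁+c₁)*(-a₁+b₁+c₁)*(a₁-b₁+c₁)*(a₁+b₁-c₁)
       = (a₂+b₂+c₂)*(-a₂+b₂+c₂)*(a₂-b₂+c₂)*(a₂+b₂-c₂)) := by
  refine ⟨by ring, ?_⟩
  simp only []
  ring
end

section
/- Let k > 0 and m > 1 be rationals and let a > 0 be rational. If 2km(m+1) = 2km/a + ak(m²−1) + √((2km/a)² + a²k²(m²−1)²) with the square root rational, then (a−1)((m²−1)a − 2m) = 0, i.e., a = 1 or a = 2m/(m²−1). Consequently there are no two non-congruent rational right triangles with the same area and the same perimeter. -/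
/-!
Area and perimeter determine the legs of a right triangle: from `w = P - (x + y)` and
`w² = x² + y²` one gets `2P(x + y) = P² + 2xy`, so the legs have a prescribed sum and product
and are the two roots of one quadratic. The map `(x, y) ↦ (x/a, ay)` preserves the area, so
if it also preserves the perimeter it can only keep or swap the legs.
-/

theorem two_mul_perimeter_mul_add_legs {R : Type*} [CommRing R] {x y w : R}
    (hw : w ^ 2 = x ^ 2 + y ^ 2) :
    2 * (x + y + w) * (x + y) = (x + y + w) ^ 2 + 2 * (x * y) := by
  linear_combination -hw

theorem eq_and_eq_or_eq_and_eq_of_add_eq_of_mul_eq {R : Type*} [CommRing R] [NoZeroDivisors R]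
    {x y x' y' : R} (hadd : x' + y' = x + y) (hmul : x' * y' = x * y) :
    (x' = x ∧ y' = y) ∨ (x' = y ∧ y' = x) := by
  have hroot : (x' - x) * (x' - y) = 0 := by linear_combination x' * hadd - hmul
  rcases mul_eq_zero.mp hroot with h | h
  · exact .inl ⟨by linear_combination h, by linear_combination hadd - h⟩
  · exact .inr ⟨by linear_combination h, by linear_combination hadd - h⟩

theorem legs_eq_of_perimeter_eq_of_area_eq {R : Type*} [CommRing R] [IsDomain R] [NeZero (2 : R)]
    {x y w x' y' w' : R}
    (hw : w ^ 2 = x ^ 2 + y ^ 2) (hw' : w' ^ 2 = x' ^ 2 + y' ^ 2)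
    (hper : x' + y' + w' = x + y + w) (hper0 : x + y + w ≠ 0) (harea : x' * y' = x * y) :
    (x' = x ∧ y' = y) ∨ (x' = y ∧ y' = x) := by
  refine eq_and_eq_or_eq_and_eq_of_add_eq_of_mul_eq ?_ harea
  have h := two_mul_perimeter_mul_add_legs hw
  have h' := two_mul_perimeter_mul_add_legs hw'
  rw [hper, harea] at h'
  exact mul_left_cancel₀ (mul_ne_zero two_ne_zero hper0) (h'.trans h.symm)

theorem stmt2_general (k m a w : ℚ) (hk : 0 < k) (hm : 1 < m) (ha : 0 < a)
    (hw2 : w^2 = (2*k*m/a)^2 + a^2*k^2*(m^2-1)^2)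
    (hper : 2*k*m*(m+1) = 2*k*m/a + a*k*(m^2-1) + w) :
    (a - 1) * ((m^2-1)*a - 2*m) = 0 ∧ (a = 1 ∨ a = 2*m/(m^2-1)) ∧
    ((2*k*m/a = 2*k*m ∧ a*k*(m^2-1) = k*(m^2-1)) ∨
     (2*k*m/a = k*(m^2-1) ∧ a*k*(m^2-1) = 2*k*m)) := by
  have hm1 : m ^ 2 - 1 ≠ 0 := by nlinarith
  have hkm1 : k * (m ^ 2 - 1) ≠ 0 := mul_ne_zero hk.ne' hm1
  have hlegs := legs_eq_of_perimeter_eq_of_area_eq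
    (x := 2 * k * m) (y := k * (m ^ 2 - 1)) (w := k * (m ^ 2 + 1))
    (x' := 2 * k * m / a) (y' := a * k * (m ^ 2 - 1)) (w' := w)
    (by ring) (by linear_combination hw2) (by linear_combination -hper) (by nlinarith)
    (by field_simp)
  have hscale : a = 1 ∨ a = 2 * m / (m ^ 2 - 1) := by
    rw [eq_div_iff hm1]
    rcases hlegs with ⟨-, h⟩ | ⟨-, h⟩
    · exact .inl (mul_right_cancel₀ hkm1 (by linear_combination h))
    · exact .inr (mul_left_cancel₀ hk.ne' (by linear_combination h))
  refine ⟨?_, hscale, hlegs⟩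
  rcases hscale with rfl | rfl
  · ring
  · field_simp
    ring

/-- If an area-preserving map (x,y) ↦ (x/a, ay) sends one rational right triangle with
legs 2km, k(m²−1) to another of the same perimeter, then a = 1 or a = 2m/(m²−1);
consequently the image triangle is congruent to the original. -/
theorem stmt2 (k m a w : ℚ) (hk : 0 < k) (hm : 1 < m) (ha : 0 < a)
    (hw : 0 ≤ w) (hw2 : w^2 = (2*k*m/a)^2 + a^2*k^2*(m^2-1)^2)
    (hper : 2*k*m*(m+1) = 2*k*m/a + a*k*(m^2-1) + w) :
    (a - 1) * ((m^2-1)*a - 2*m) = 0 ∧ (a = 1 ∨ a = 2*m/(m^2-1)) ∧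
    ((2*k*m/a = 2*k*m ∧ a*k*(m^2-1) = k*(m^2-1)) ∨
     (2*k*m/a = k*(m^2-1) ∧ a*k*(m^2-1) = 2*k*m)) :=
  stmt2_general k m a w hk hm ha hw2 hper
end

section
/- Let m > 1 be rational and let a > 0 be rational with w₄ ≥ 0 rational satisfying (2m/a)² + a²(m²−1)² = w₄² and 2(m+1)² = 4m/a + 2w₄. Then (a−1)((m−1)²a² + (m−1)²a − 4m) = 0. In particular a = 1 or a = (1−m ± √(m²+14m+1))/(2(m−1)), so for each m there is at most one value a ≠ 1 with a > 0 rational, and hence at most two distinct isosceles triangles in this family share the same area and perimeter. -/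
lemma stmt3_key (m a w : ℚ) (hm : 1 < m) (ha : 0 < a)
    (h1 : (2*m/a)^2 + a^2*(m^2-1)^2 = w^2)
    (h2 : 2*(m+1)^2 = 4*m/a + 2*w) :
    (a - 1) * ((m-1)^2*a^2 + (m-1)^2*a - 4*m) = 0 := by
  have ha' : a ≠ 0 := ha.ne'
  field_simp at h1 h2
  have key : a*(m+1)^2*((a - 1) * ((m-1)^2*a^2 + (m-1)^2*a - 4*m)) = 0 := by
    linear_combination h1 - ((w*a + (m+1)^2*a - 2*m)/2) * h2
  have hne : a*(m+1)^2 ≠ 0 := by positivity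
  exact (mul_eq_zero.mp key).resolve_left hne

/-- Isosceles triangle case: the perimeter/area system forces
(a−1)((m−1)²a²+(m−1)²a−4m) = 0, and there is at most one admissible a ≠ 1. -/
theorem stmt3 (m : ℚ) (hm : 1 < m) :
    (∀ a w₄ : ℚ, 0 < a → 0 ≤ w₄ →
      (2*m/a)^2 + a^2*(m^2-1)^2 = w₄^2 →
      2*(m+1)^2 = 4*m/a + 2*w₄ →
      (a - 1) * ((m-1)^2*a^2 + (m-1)^2*a - 4*m) = 0) ∧
    (∀ a₁ a₂ w₄ w₄' : ℚ, 0 < a₁ → 0 ≤ w₄ →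
      (2*m/a₁)^2 + a₁^2*(m^2-1)^2 = w₄^2 →
      2*(m+1)^2 = 4*m/a₁ + 2*w₄ →
      0 < a₂ → 0 ≤ w₄' →
      (2*m/a₂)^2 + a₂^2*(m^2-1)^2 = w₄'^2 →
      2*(m+1)^2 = 4*m/a₂ + 2*w₄' →
      a₁ ≠ 1 → a₂ ≠ 1 → a₁ = a₂) := by
  constructor
  · intro a w₄ ha _ h1 h2
    exact stmt3_key m a w₄ hm ha h1 h2
  · intro a₁ a₂ w₄ w₄' ha₁ _ h1 h2 ha₂ _ h1' h2' hne₁ hne₂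
    have k1 := stmt3_key m a₁ w₄ hm ha₁ h1 h2
    have k2 := stmt3_key m a₂ w₄' hm ha₂ h1' h2'
    have e1 : (m-1)^2*a₁^2 + (m-1)^2*a₁ - 4*m = 0 :=
      (mul_eq_zero.mp k1).resolve_left (sub_ne_zero.mpr hne₁)
    have e2 : (m-1)^2*a₂^2 + (m-1)^2*a₂ - 4*m = 0 :=
      (mul_eq_zero.mp k2).resolve_left (sub_ne_zero.mpr hne₂)
    have key : (a₁ - a₂) * ((m-1)^2*(a₁ + a₂ + 1)) = 0 := by
      linear_combination e1 - e2
    have hm1 : 0 < m - 1 := by linarith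
    have hpos : (m-1)^2*(a₁ + a₂ + 1) ≠ 0 := by positivity
    have := (mul_eq_zero.mp key).resolve_right hpos
    linarith [sub_eq_zero.mp this]
end

section
/- Let m > 1 be rational and let a > 0 be rational with w₄ ≥ 0 rational satisfying ((m²−1)/a)² + 4a²m² = w₄² and 4m² = 2(m²−1)/a + 2w₄. Then (a−1)(a² + a − (m²−1)) = 0. -/
/-- Second isosceles family: the system forces (a−1)(a²+a−(m²−1)) = 0. -/
theorem stmt4 (m a w₄ : ℚ) (hm : 1 < m) (ha : 0 < a) (hw : 0 ≤ w₄)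
    (h1 : ((m^2-1)/a)^2 + 4*a^2*m^2 = w₄^2)
    (h2 : 4*m^2 = 2*(m^2-1)/a + 2*w₄) :
    (a - 1) * (a^2 + a - (m^2-1)) = 0 := by
  have ha' : a ≠ 0 := ne_of_gt ha
  have hw4 : w₄ = 2*m^2 - (m^2-1)/a := by field_simp at h2 ⊢; linarith
  subst hw4
  field_simp at h1
  have key : 4*m^2*a*((a - 1) * (a^2 + a - (m^2-1))) = 0 := by linear_combination h1
  have h4 : (4*m^2*a : ℚ) ≠ 0 := by positivity
  exact (mul_eq_zero.mp key).resolve_left h4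
end

section
/- For every rational m > 1, the cubic polynomial f(a) = (m+1)(m−1)²a³ − m²(m+1)a + 2m² has positive discriminant with respect to a: the discriminant equals 4(m²−1)²m⁴(m⁴ + 2m³ − 26m² + 54m − 27), and m⁴ + 2m³ − 26m² + 54m − 27 > 0 for all m > 1. Moreover every positive real root a of f satisfies a < m/(m−1). -/
/-- The discriminant of f(a) = (m+1)(m−1)²a³ − m²(m+1)a + 2m² is
4(m²−1)²m⁴(m⁴+2m³−26m²+54m−27), which is positive for m > 1; and every positive real
root a of f satisfies a < m/(m−1). -/
theorem stmt6 (m : ℚ) (hm : 1 < m) :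
    (let c₃ : ℚ := (m+1)*(m-1)^2; let c₂ : ℚ := 0;
     let c₁ : ℚ := -(m^2*(m+1)); let c₀ : ℚ := 2*m^2;
     18*c₃*c₂*c₁*c₀ - 4*c₂^3*c₀ + c₂^2*c₁^2 - 4*c₃*c₁^3 - 27*c₃^2*c₀^2
       = 4*(m^2-1)^2*m^4*(m^4 + 2*m^3 - 26*m^2 + 54*m - 27)) ∧
    (0 < m^4 + 2*m^3 - 26*m^2 + 54*m - 27) ∧
    (∀ a : ℝ, 0 < a →
      ((m:ℝ)+1)*((m:ℝ)-1)^2*a^3 - (m:ℝ)^2*((m:ℝ)+1)*a + 2*(m:ℝ)^2 = 0 →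
      a < (m:ℝ)/((m:ℝ)-1)) := by
  refine ⟨by ring, by nlinarith [sq_nonneg (m-1), sq_nonneg (m^2+3*m-9), sq_nonneg (m-3), sq_nonneg m], ?_⟩
  intro a ha hf
  have hm' : (1:ℝ) < (m:ℝ) := by exact_mod_cast hm
  have h1 : (0:ℝ) < (m:ℝ) - 1 := by linarith
  have h2 : (0:ℝ) < (m:ℝ) + 1 := by linarith
  rw [lt_div_iff₀ h1]
  nlinarith [sq_nonneg a, mul_pos ha h2, mul_pos (mul_pos ha h2) h1, sq_nonneg ((m:ℝ) - 1), sq_nonneg (a*((m:ℝ)-1) - (m:ℝ)), sq_nonneg (a*((m:ℝ)-1) + (m:ℝ))]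
end

section
/- Let k > 0 and p > 1 be rationals. Then setting s = 0, r = 2k(p²+p+1)/p², t = k(p+1)(2p²+p+1)/p⁴, a = 2p²/(p²+1), b = p(p²−1)/(p²+1), w₁ = k(p+1)(2p²+p+1)/p⁴, w₂ = k(p²+1)(2p²+2p+1)/p⁴, w₃ = k(p+1)(2p²+p+1)/p³, w₄ = k(p⁴+2p³+4p²+2p+1)/p⁴ gives a solution of the system s² + t² = w₁², (s−r)² + t² = w₂², (s/a + bt)² + (at)² = w₃², ((s−r)/a + bt)² + (at)² = w₄², r + w₁ + w₂ = r/a + w₃ + w₄. -/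
/-- A parametric solution of the weak-metric-equivalence system (Case 3.2.1). -/
theorem stmt9 (k p : ℚ) (hk : 0 < k) (hp : 1 < p) :
    let s : ℚ := 0
    let r : ℚ := 2*k*(p^2+p+1)/p^2
    let t : ℚ := k*(p+1)*(2*p^2+p+1)/p^4
    let a : ℚ := 2*p^2/(p^2+1)
    let b : ℚ := p*(p^2-1)/(p^2+1)
    let w₁ : ℚ := k*(p+1)*(2*p^2+p+1)/p^4
    let w₂ : ℚ := k*(p^2+1)*(2*p^2+2*p+1)/p^4
    let w₃ : ℚ := k*(p+1)*(2*p^2+p+1)/p^3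
    let w₄ : ℚ := k*(p^4+2*p^3+4*p^2+2*p+1)/p^4
    s^2 + t^2 = w₁^2 ∧
    (s - r)^2 + t^2 = w₂^2 ∧
    (s/a + b*t)^2 + (a*t)^2 = w₃^2 ∧
    ((s - r)/a + b*t)^2 + (a*t)^2 = w₄^2 ∧
    r + w₁ + w₂ = r/a + w₃ + w₄ := by
  have hp0 : p ≠ 0 := by positivity
  have hp2 : p^2 + 1 ≠ 0 := by positivity
  refine ⟨?_, ?_, ?_, ?_, ?_⟩ <;>
    field_simp <;> ring_nf
end

section
/- For every rational p > 1, the points Q = (3p(p³−6p²+p−12), 0) and P = (3p²(p²−6p+1), 108p²(p+1)) lie on the elliptic curve E_p : Y² = X³ − 27p²(p⁶−12p⁵+38p⁴−36p³+49p²−24p+48)X + 54p⁴(p³−6p²+p−12)(p⁵−12p⁴+38p³−36p²+p−24). Moreover the discriminant quantity 544195584·p⁶(p⁴−10p³+17p²+8p+16)(p−1)²(p²+1)² is nonzero for all rational p > 1. -/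
/-!
Both curve memberships are polynomial identities in `p`. For the discriminant, the only factor
that can vanish for `p > 1` is the monic integer quartic `p⁴ - 10p³ + 17p² + 8p + 16`; by the
rational root theorem a rational root would be an integer, but the quartic has no root modulo 5.
-/

open Polynomial

theorem Polynomial.aeval_rat_ne_zero_of_forall_zmod {f : ℤ[X]} (hf : f.Monic) {m : ℕ}
    (hm : ∀ x : ZMod m, (f.map (Int.castRingHom (ZMod m))).eval x ≠ 0) (q : ℚ) :
    aeval q f ≠ 0 := by
  intro hq
  obtain ⟨n, rfl⟩ := isInteger_of_is_root_of_monic hf hq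
  rw [aeval_algebraMap_apply_eq_algebraMap_eval,
    map_eq_zero_iff _ (algebraMap ℤ ℚ).injective_int] at hq
  exact hm n (by rw [eval_intCast_map, Int.cast_id, hq, map_zero])

theorem rat_quartic_ne_zero (p : ℚ) : p^4 - 10*p^3 + 17*p^2 + 8*p + 16 ≠ 0 := by
  have hf : (X^4 - 10*X^3 + 17*X^2 + 8*X + 16 : ℤ[X]).Monic := by monicity!
  have hroot := aeval_rat_ne_zero_of_forall_zmod hf (m := 5) (by simp; decide) p
  simpa [map_ofNat] using hroot

/-- The points Q and P lie on the elliptic curve E_p, and the discriminant quantity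
is nonzero for all rational p > 1. -/
theorem stmt11 (p : ℚ) (hp : 1 < p) :
    (let QX : ℚ := 3*p*(p^3-6*p^2+p-12); let QY : ℚ := 0;
     QY^2 = QX^3 - 27*p^2*(p^6-12*p^5+38*p^4-36*p^3+49*p^2-24*p+48)*QX
       + 54*p^4*(p^3-6*p^2+p-12)*(p^5-12*p^4+38*p^3-36*p^2+p-24)) ∧
    (let PX : ℚ := 3*p^2*(p^2-6*p+1); let PY : ℚ := 108*p^2*(p+1);
     PY^2 = PX^3 - 27*p^2*(p^6-12*p^5+38*p^4-36*p^3+49*p^2-24*p+48)*PX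
       + 54*p^4*(p^3-6*p^2+p-12)*(p^5-12*p^4+38*p^3-36*p^2+p-24)) ∧
    544195584*p^6*(p^4-10*p^3+17*p^2+8*p+16)*(p-1)^2*(p^2+1)^2 ≠ 0 := by
  refine ⟨by ring, by ring, ?_⟩
  have hp0 : p ≠ 0 := (zero_lt_one.trans hp).ne'
  have hp1 : p - 1 ≠ 0 := sub_ne_zero.mpr hp.ne'
  have hsq : p^2 + 1 ≠ 0 := by positivity
  exact mul_ne_zero (mul_ne_zero (mul_ne_zero (mul_ne_zero (by norm_num) (pow_ne_zero 6 hp0))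
    (rat_quartic_ne_zero p)) (pow_ne_zero 2 hp1)) (pow_ne_zero 2 hsq)
end

section
/- Let k > 0 and p > 1 be rationals. Then s = 0, r = 2kp(p+1)/(p²−p+1), t = k(2p−1)(2p²+1)/(p²−p+1)², a = 2p(p+1)/(2p²+1), b = (p+1)²(p−1)/(2p²+1), w₁ = k(2p−1)(2p²+1)/(p²−p+1)², w₂ = k(2p⁴+4p²−2p+1)/(p²−p+1)², w₃ = k(p+1)(p²+1)(2p−1)/(p²−p+1)², w₄ = kp(5p²−2p+2)/(p²−p+1)² satisfy s² + t² = w₁², (s−r)² + t² = w₂², (s/a + bt)² + (at)² = w₃², ((s−r)/a + bt)² + (at)² = w₄², and r + w₁ + w₂ = r/a + w₃ + w₄. -/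
theorem stmt12_general (k p : ℚ) (hp : 1 < p) :
    let s : ℚ := 0
    let r : ℚ := 2*k*p*(p+1)/(p^2-p+1)
    let t : ℚ := k*(2*p-1)*(2*p^2+1)/(p^2-p+1)^2
    let a : ℚ := 2*p*(p+1)/(2*p^2+1)
    let b : ℚ := (p+1)^2*(p-1)/(2*p^2+1)
    let w₁ : ℚ := k*(2*p-1)*(2*p^2+1)/(p^2-p+1)^2
    let w₂ : ℚ := k*(2*p^4+4*p^2-2*p+1)/(p^2-p+1)^2
    let w₃ : ℚ := k*(p+1)*(p^2+1)*(2*p-1)/(p^2-p+1)^2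
    let w₄ : ℚ := k*p*(5*p^2-2*p+2)/(p^2-p+1)^2
    s^2 + t^2 = w₁^2 ∧
    (s - r)^2 + t^2 = w₂^2 ∧
    (s/a + b*t)^2 + (a*t)^2 = w₃^2 ∧
    ((s - r)/a + b*t)^2 + (a*t)^2 = w₄^2 ∧
    r + w₁ + w₂ = r/a + w₃ + w₄ := by
  intro s r t a b w₁ w₂ w₃ w₄
  -- `field_simp` normalises the denominator `p^2 - p + 1` to this shape.
  have hq : p * (p - 1) + 1 ≠ 0 := by nlinarith [sq_nonneg (p - 1)]
  -- `p` and `p + 1` are the factors of the numerator of `a`, which is inverted in `s/a` and `r/a`.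
  have hp₀ : p ≠ 0 := by linarith
  have hp₁ : p + 1 ≠ 0 := by linarith
  refine ⟨?_, ?_, ?_, ?_, ?_⟩ <;> simp only [s, r, t, a, b, w₁, w₂, w₃, w₄] <;> field_simp <;> ring

/-- A second parametric solution (from the point [2]P) of the
weak-metric-equivalence system. -/
theorem stmt12 (k p : ℚ) (hk : 0 < k) (hp : 1 < p) :
    let s : ℚ := 0
    let r : ℚ := 2*k*p*(p+1)/(p^2-p+1)
    let t : ℚ := k*(2*p-1)*(2*p^2+1)/(p^2-p+1)^2
    let a : ℚ := 2*p*(p+1)/(2*p^2+1)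
    let b : ℚ := (p+1)^2*(p-1)/(2*p^2+1)
    let w₁ : ℚ := k*(2*p-1)*(2*p^2+1)/(p^2-p+1)^2
    let w₂ : ℚ := k*(2*p^4+4*p^2-2*p+1)/(p^2-p+1)^2
    let w₃ : ℚ := k*(p+1)*(p^2+1)*(2*p-1)/(p^2-p+1)^2
    let w₄ : ℚ := k*p*(5*p^2-2*p+2)/(p^2-p+1)^2
    s^2 + t^2 = w₁^2 ∧
    (s - r)^2 + t^2 = w₂^2 ∧
    (s/a + b*t)^2 + (a*t)^2 = w₃^2 ∧
    ((s - r)/a + b*t)^2 + (a*t)^2 = w₄^2 ∧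
    r + w₁ + w₂ = r/a + w₃ + w₄ :=
  stmt12_general k p hp
end

section
/- Let m > 1 be rational and a > 0, b rationals satisfying (2m/a)² = (m/a + b(m²−1))² + a²(m²−1)² and 2(m+1)² = 8m/a. Then 16(m−1)²(m+1)⁴b² + 8(m−1)(m+1)⁵b − 3m⁶ − 18m⁵ + 211m⁴ − 572m³ + 211m² − 18m − 3 = 0, and consequently (m³+11m²−5m+1)(m³−5m²+11m+1) is the square of a rational. -/
/-! The perimeter condition `2(m+1)² = 8m/a` forces `a (m+1)² = 4m`; clearing denominators in the
side-length condition with this value leaves the stated quadratic in `b`, times the nonzero factor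
`16 m⁴ (m+1)²`. Completing the square, that quadratic
reads `(4(m-1)(m+1)² b + (m+1)³)² = 4 (m³+11m²-5m+1)(m³-5m²+11m+1)`. -/

section

variable {K : Type*} [Field K] [CharZero K]

theorem mul_sq_eq_of_two_mul_sq_eq_div {m a : K} (hm₁ : m + 1 ≠ 0)
    (h : 2 * (m + 1) ^ 2 = 8 * m / a) : a * (m + 1) ^ 2 = 4 * m := by
  have ha : a ≠ 0 := by
    rintro rfl
    simp_all
  field_simp at h
  linear_combination h / 2

theorem triangle_rhombus_quadratic_eq_zero {m a b : K} (hm : m ≠ 0)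
    (hm₁ : m + 1 ≠ 0) (ha : a * (m + 1) ^ 2 = 4 * m)
    (h : (2 * m / a) ^ 2 = (m / a + b * (m ^ 2 - 1)) ^ 2 + a ^ 2 * (m ^ 2 - 1) ^ 2) :
    16*(m-1)^2*(m+1)^4*b^2 + 8*(m-1)*(m+1)^5*b
      - 3*m^6 - 18*m^5 + 211*m^4 - 572*m^3 + 211*m^2 - 18*m - 3 = 0 := by
  obtain rfl : a = 4 * m / (m + 1) ^ 2 := by
    field_simp
    exact ha
  field_simp at h
  have hfactor : (16 * m ^ 4 * (m + 1) ^ 2 : K) ≠ 0 := by simp [hm, hm₁]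
  refine (mul_eq_zero.mp ?_).resolve_left hfactor
  linear_combination (-16 * m ^ 4) * h

end

theorem triangle_rhombus_quadratic_eq_sq_sub {R : Type*} [CommRing R] (m b : R) :
    16*(m-1)^2*(m+1)^4*b^2 + 8*(m-1)*(m+1)^5*b
      - 3*m^6 - 18*m^5 + 211*m^4 - 572*m^3 + 211*m^2 - 18*m - 3
      = (4*(m-1)*(m+1)^2*b + (m+1)^3)^2
        - 4*((m^3+11*m^2-5*m+1)*(m^3-5*m^2+11*m+1)) := by
  ring

theorem stmt14_general (m a b : ℚ) (hm : 1 < m)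
    (h1 : (2*m/a)^2 = (m/a + b*(m^2-1))^2 + a^2*(m^2-1)^2)
    (h2 : 2*(m+1)^2 = 8*m/a) :
    16*(m-1)^2*(m+1)^4*b^2 + 8*(m-1)*(m+1)^5*b
      - 3*m^6 - 18*m^5 + 211*m^4 - 572*m^3 + 211*m^2 - 18*m - 3 = 0 ∧
    ∃ w : ℚ, (m^3+11*m^2-5*m+1)*(m^3-5*m^2+11*m+1) = w^2 := by
  have hm₀ : m ≠ 0 := by positivity
  have hm₁ : m + 1 ≠ 0 := by positivity
  have hquad := triangle_rhombus_quadratic_eq_zero hm₀ hm₁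
    (mul_sq_eq_of_two_mul_sq_eq_div hm₁ h2) h1
  refine ⟨hquad, (4*(m-1)*(m+1)^2*b + (m+1)^3) / 2, ?_⟩
  linear_combination (-1/4 : ℚ) * (triangle_rhombus_quadratic_eq_sq_sub m b).symm.trans hquad

/-- Isosceles-triangle–rhombus pairs (Case 4.2.2.1): b satisfies the stated quadratic,
hence (m³+11m²−5m+1)(m³−5m²+11m+1) is a rational square. -/
theorem stmt14 (m a b : ℚ) (hm : 1 < m) (ha : 0 < a)
    (h1 : (2*m/a)^2 = (m/a + b*(m^2-1))^2 + a^2*(m^2-1)^2)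
    (h2 : 2*(m+1)^2 = 8*m/a) :
    16*(m-1)^2*(m+1)^4*b^2 + 8*(m-1)*(m+1)^5*b
      - 3*m^6 - 18*m^5 + 211*m^4 - 572*m^3 + 211*m^2 - 18*m - 3 = 0 ∧
    ∃ w : ℚ, (m^3+11*m^2-5*m+1)*(m^3-5*m^2+11*m+1) = w^2 :=
  stmt14_general m a b hm h1 h2
end

section
/- Let m > 1 be rational and a > 0, b rationals satisfying ((m²−1)/a)² = ((m²−1)/(2a) + 2bm)² + 4a²m² and 4m² = 4(m²−1)/a. Then 16b²m⁴ + 8bm⁵ − 3m⁶ + 16m⁴ − 32m² + 16 = 0, and consequently (m³−2m²+2)(m³+2m²−2) is the square of a rational. -/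
/-!
The perimeter condition says `m² a = m² - 1`, so `(m² - 1)/a = m²`; substituting this into the
area condition and clearing denominators leaves a quadratic in `b`. Its discriminant, up to the
square factor `256 m⁴`, is `4 m⁶ - 16 (m² - 1)² = 4 (m³ - 2m² + 2)(m³ + 2m² - 2)`, and completing
the square exhibits it as the square of `4 b m² + m³`.
-/

theorem quadratic_eq_zero_of_area_perimeter {K : Type*} [Field K] [NeZero (2 : K)] {m a b : K}
    (ha : a ≠ 0)
    (harea : ((m^2-1)/a)^2 = ((m^2-1)/(2*a) + 2*b*m)^2 + 4*a^2*m^2)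
    (hperim : m^2*a = m^2-1) :
    16*b^2*m^4 + 8*b*m^5 - 3*m^6 + 16*m^4 - 32*m^2 + 16 = 0 := by
  have hdiv : (m^2-1)/a = m^2 := by rw [← hperim]; field_simp
  have hdiv2 : (m^2-1)/(2*a) = m^2/2 := by rw [div_mul_eq_div_div_swap, hdiv]
  rw [hdiv, hdiv2] at harea
  field_simp at harea
  linear_combination (-m^2) * harea - 16*(m^2*a + m^2 - 1) * hperim

theorem sq_eq_of_quadratic_eq_zero {R : Type*} [CommRing R] {m b : R}
    (h : 16*b^2*m^4 + 8*b*m^5 - 3*m^6 + 16*m^4 - 32*m^2 + 16 = 0) :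
    (4*b*m^2 + m^3)^2 = 4*((m^3-2*m^2+2)*(m^3+2*m^2-2)) := by
  linear_combination h

theorem stmt15_general (m a b : ℚ) (ha : 0 < a)
    (h1 : ((m^2-1)/a)^2 = ((m^2-1)/(2*a) + 2*b*m)^2 + 4*a^2*m^2)
    (h2 : 4*m^2 = 4*(m^2-1)/a) :
    16*b^2*m^4 + 8*b*m^5 - 3*m^6 + 16*m^4 - 32*m^2 + 16 = 0 ∧
    ∃ w : ℚ, (m^3-2*m^2+2)*(m^3+2*m^2-2) = w^2 := by
  have ha' : a ≠ 0 := ha.ne'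
  have hperim : m^2*a = m^2-1 := by
    field_simp at h2
    linarith
  have hquad := quadratic_eq_zero_of_area_perimeter ha' h1 hperim
  refine ⟨hquad, (4*b*m^2 + m^3)/2, ?_⟩
  linear_combination -(sq_eq_of_quadratic_eq_zero hquad)/4

/-- Isosceles-triangle–rhombus pairs (Case 4.2.2.2): b satisfies the stated quadratic,
hence (m³−2m²+2)(m³+2m²−2) is a rational square. -/
theorem stmt15 (m a b : ℚ) (hm : 1 < m) (ha : 0 < a)
    (h1 : ((m^2-1)/a)^2 = ((m^2-1)/(2*a) + 2*b*m)^2 + 4*a^2*m^2)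
    (h2 : 4*m^2 = 4*(m^2-1)/a) :
    16*b^2*m^4 + 8*b*m^5 - 3*m^6 + 16*m^4 - 32*m^2 + 16 = 0 ∧
    ∃ w : ℚ, (m^3-2*m^2+2)*(m^3+2*m^2-2) = w^2 :=
  stmt15_general m a b ha h1 h2
end

section
/- Let k > 0 and p be a rational with 1+√2 < p < (3+√5)/2. Then s = 0, r = −k(p−1)⁴/(2p(p²−3p+1)), t = k(p²+2p−1)(p²−2p−1)(p²−4p+1)²/(16p²(p²−3p+1)²), a = −2(p−1)²p/((p²+1)(p²−4p+1)), b = −(p−1)³(p+1)/((p²+1)(p²−4p+1)) satisfy: r > 0, t > 0, a > 0, s² + t² is a rational square, (s−r)² + t² is a rational square, (s/(2a) + bt)² + (at)² is a rational square w₃², and r + √(s²+t²) + √((s−r)²+t²) = 2(r/(2a) + w₃). -/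
/-!
In the notation of the statement, `base`, `height`, `yScale` and `shear` are `r`, `t`, `a`
and `b`. With `m = legParam p` the triangle is a scaled Pythagorean triple: its legs are
`r = 2km` and `t = k(m² - 1)`, its hypotenuse is `k(m² + 1)`. The column `(b, a)` equals
`c (p² - 1, 2p) / (p² + 1)` with `c = shearNorm p`, so it has length `c` and the image
`t (b, a)` of the side from the origin to `(0, t)` has length `ct`. Hence all three square
roots are rational, and equality of the perimeters becomes a rational-function identity in
`p`. For `p > 1` the bounds on `p` amount to `p² - 2p - 1 > 0` and `p² - 3p + 1 < 0`,
which fixes the signs.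
-/

namespace RightTriangleParallelogram

section Field

variable {K : Type*} [Field K] (k : K) {p : K}

def base (k p : K) : K := -(k * (p - 1) ^ 4 / (2 * p * (p ^ 2 - 3 * p + 1)))

def height (k p : K) : K :=
  k * (p ^ 2 + 2 * p - 1) * (p ^ 2 - 2 * p - 1) * (p ^ 2 - 4 * p + 1) ^ 2 /
    (16 * p ^ 2 * (p ^ 2 - 3 * p + 1) ^ 2)

def yScale (p : K) : K := -(2 * (p - 1) ^ 2 * p / ((p ^ 2 + 1) * (p ^ 2 - 4 * p + 1)))

def shear (p : K) : K := -((p - 1) ^ 3 * (p + 1) / ((p ^ 2 + 1) * (p ^ 2 - 4 * p + 1)))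

def legParam (p : K) : K := -((p - 1) ^ 4 / (4 * p * (p ^ 2 - 3 * p + 1)))

def shearNorm (p : K) : K := -((p - 1) ^ 2 / (p ^ 2 - 4 * p + 1))

theorem yScale_eq : yScale p = shearNorm p * (2 * p) / (p ^ 2 + 1) := by
  unfold yScale shearNorm
  simp only [div_eq_mul_inv, mul_inv]
  ring

theorem shear_eq : shear p = shearNorm p * (p ^ 2 - 1) / (p ^ 2 + 1) := by
  unfold shear shearNorm
  simp only [div_eq_mul_inv, mul_inv]
  ring

theorem shear_sq_add_yScale_sq (h : p ^ 2 + 1 ≠ 0) :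
    shear p ^ 2 + yScale p ^ 2 = shearNorm p ^ 2 := by
  rw [yScale_eq, shear_eq]
  field_simp
  ring

variable [CharZero K]

theorem base_eq : base k p = 2 * k * legParam p := by
  unfold base legParam
  simp only [div_eq_mul_inv, mul_inv]
  ring

theorem height_eq (hp : p ≠ 0) (h3 : p ^ 2 - 3 * p + 1 ≠ 0) :
    height k p = k * (legParam p ^ 2 - 1) := by
  unfold height legParam
  -- otherwise `field_simp` rewrites the quadratic and no longer recognises `h3`
  generalize hq : p ^ 2 - 3 * p + 1 = q at *
  field_simp
  rw [← hq]
  ring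

theorem base_sq_add_height_sq (hp : p ≠ 0) (h3 : p ^ 2 - 3 * p + 1 ≠ 0) :
    base k p ^ 2 + height k p ^ 2 = (k * (legParam p ^ 2 + 1)) ^ 2 := by
  rw [base_eq, height_eq k hp h3]
  ring

theorem perimeter_eq (hp : p ≠ 0) (h3 : p ^ 2 - 3 * p + 1 ≠ 0) :
    base k p + height k p + k * (legParam p ^ 2 + 1) =
      2 * (base k p / (2 * yScale p) + shearNorm p * height k p) := by
  unfold base height yScale legParam shearNorm
  generalize hq : p ^ 2 - 3 * p + 1 = q at *
  field_simp
  rw [← hq]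
  ring

end Field

section Order

variable {K : Type*} [Field K] [LinearOrder K] [IsStrictOrderedRing K] {k p : K}

theorem legParam_pos (hp : 1 < p) (h3 : p ^ 2 - 3 * p + 1 < 0) : 0 < legParam p := by
  have : 0 < (p - 1) ^ 4 := by have := sub_pos.2 hp; positivity
  unfold legParam
  exact neg_pos.2 (div_neg_of_pos_of_neg this (by nlinarith))

theorem shearNorm_pos (hp : 1 < p) (h3 : p ^ 2 - 3 * p + 1 < 0) : 0 < shearNorm p := by
  have : 0 < (p - 1) ^ 2 := by have := sub_pos.2 hp; positivity
  unfold shearNorm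
  exact neg_pos.2 (div_neg_of_pos_of_neg this (by linarith))

theorem base_pos (hk : 0 < k) (hp : 1 < p) (h3 : p ^ 2 - 3 * p + 1 < 0) : 0 < base k p := by
  rw [base_eq]
  have := legParam_pos hp h3
  positivity

theorem height_pos (hk : 0 < k) (hp : 1 < p) (h2 : 0 < p ^ 2 - 2 * p - 1)
    (h3 : p ^ 2 - 3 * p + 1 < 0) : 0 < height k p := by
  have : 0 < p := by linarith
  have : 0 < p ^ 2 + 2 * p - 1 := by nlinarith
  have : p ^ 2 - 3 * p + 1 ≠ 0 := h3.ne
  have : p ^ 2 - 4 * p + 1 ≠ 0 := by linarith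
  unfold height
  positivity

theorem yScale_pos (hp : 1 < p) (h3 : p ^ 2 - 3 * p + 1 < 0) : 0 < yScale p := by
  rw [yScale_eq]
  have := shearNorm_pos hp h3
  have : 0 < p := by linarith
  positivity

end Order

theorem sq_sub_two_mul_sub_one_pos {x : ℝ} (h : 1 + √2 < x) : 0 < x ^ 2 - 2 * x - 1 := by
  nlinarith [Real.sq_sqrt (show (0 : ℝ) ≤ 2 by norm_num), Real.sqrt_nonneg 2]

theorem sq_sub_three_mul_add_one_neg {x : ℝ} (h1 : 1 < x) (h2 : x < (3 + √5) / 2) :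
    x ^ 2 - 3 * x + 1 < 0 := by
  have h5 : 1 < √5 := by rw [Real.lt_sqrt zero_le_one]; norm_num
  nlinarith [Real.sq_sqrt (show (0 : ℝ) ≤ 5 by norm_num),
    mul_pos (sub_pos.2 h2) (show 0 < x - (3 - √5) / 2 by linarith)]

end RightTriangleParallelogram

open RightTriangleParallelogram in
/-- A parametric rational right-triangle–parallelogram pair with the same area and
the same perimeter (Case 4.3.1). -/
theorem stmt16 (k p : ℚ) (hk : 0 < k)
    (hp1 : 1 + Real.sqrt 2 < (p : ℝ)) (hp2 : (p : ℝ) < (3 + Real.sqrt 5)/2) :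
    let s : ℚ := 0
    let r : ℚ := -(k*(p-1)^4/(2*p*(p^2-3*p+1)))
    let t : ℚ := k*(p^2+2*p-1)*(p^2-2*p-1)*(p^2-4*p+1)^2/(16*p^2*(p^2-3*p+1)^2)
    let a : ℚ := -(2*(p-1)^2*p/((p^2+1)*(p^2-4*p+1)))
    let b : ℚ := -((p-1)^3*(p+1)/((p^2+1)*(p^2-4*p+1)))
    0 < r ∧ 0 < t ∧ 0 < a ∧
    ∃ w₁ w₂ w₃ : ℚ, 0 ≤ w₁ ∧ 0 ≤ w₂ ∧ 0 ≤ w₃ ∧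
      s^2 + t^2 = w₁^2 ∧
      (s - r)^2 + t^2 = w₂^2 ∧
      (s/(2*a) + b*t)^2 + (a*t)^2 = w₃^2 ∧
      r + w₁ + w₂ = 2*(r/(2*a) + w₃) := by
  intro s r t a b
  have hp : 1 < p := by exact_mod_cast (show (1 : ℝ) < p by linarith [Real.sqrt_nonneg 2])
  have h2 : 0 < p ^ 2 - 2 * p - 1 := by exact_mod_cast sq_sub_two_mul_sub_one_pos hp1
  have h3 : p ^ 2 - 3 * p + 1 < 0 := by
    exact_mod_cast sq_sub_three_mul_add_one_neg (by exact_mod_cast hp) hp2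
  have hp0 : p ≠ 0 := (zero_lt_one.trans hp).ne'
  have ht := height_pos hk hp h2 h3
  refine ⟨base_pos hk hp h3, ht, yScale_pos hp h3, t, k * (legParam p ^ 2 + 1),
    shearNorm p * t, ht.le, by positivity, (mul_pos (shearNorm_pos hp h3) ht).le,
    by simp [s], ?_, ?_, perimeter_eq k hp0 h3.ne⟩
  · show (0 - base k p) ^ 2 + height k p ^ 2 = (k * (legParam p ^ 2 + 1)) ^ 2
    rw [zero_sub, neg_sq, base_sq_add_height_sq k hp0 h3.ne]
  · show (0 / (2 * yScale p) + shear p * height k p) ^ 2 + (yScale p * height k p) ^ 2 =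
      (shearNorm p * height k p) ^ 2
    rw [zero_div, zero_add, mul_pow, mul_pow, mul_pow, ← add_mul,
      shear_sq_add_yScale_sq (by positivity)]
end

section
/- Let m > 1 and p > 1 be rationals with (m²−1)p² − 2(m−1)²p + m²−1 > 0 and (m²−1)p² − 4(m²+1)p + m²−1 < 0. Then r = −(p²+1)((m²−1)p² − 4(m²+1)p + m²−1)/((m²−1)p² − 2(m−1)²p + m²−1), s = 8mp/(m²−1), t = 4p, a = 1/2, b = ((m²−1)p² − 8mp − m²+1)/(4p(m²−1)) satisfy: r > 0, s² + t² = w₁² is a rational square, (s−r)² + t² = w₂² is a rational square, (s/(2a) + bt)² + (at)² = w₃² is a rational square, and r + w₁ + w₂ = 2(r/(2a) + w₃), that is, since a = 1/2, r + w₁ + w₂ = 2(r + w₃), where w₁ = √(s²+t²), w₂ = √((s−r)²+t²). -/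
/-- A parametric rational triangle–parallelogram pair with the same area and the same
perimeter (Case 4.3.2, from the point [2]P). -/
theorem stmt17 (m p : ℚ) (hm : 1 < m) (hp : 1 < p)
    (h1 : 0 < (m^2-1)*p^2 - 2*(m-1)^2*p + m^2-1)
    (h2 : (m^2-1)*p^2 - 4*(m^2+1)*p + m^2-1 < 0) :
    let r : ℚ := -((p^2+1)*((m^2-1)*p^2 - 4*(m^2+1)*p + m^2-1)
      /((m^2-1)*p^2 - 2*(m-1)^2*p + m^2-1))
    let s : ℚ := 8*m*p/(m^2-1)
    let t : ℚ := 4*p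
    let a : ℚ := 1/2
    let b : ℚ := ((m^2-1)*p^2 - 8*m*p - m^2+1)/(4*p*(m^2-1))
    0 < r ∧
    ∃ w₁ w₂ w₃ : ℚ, 0 ≤ w₁ ∧ 0 ≤ w₂ ∧ 0 ≤ w₃ ∧
      s^2 + t^2 = w₁^2 ∧
      (s - r)^2 + t^2 = w₂^2 ∧
      (s/(2*a) + b*t)^2 + (a*t)^2 = w₃^2 ∧
      r + w₁ + w₂ = 2*(r/(2*a) + w₃) := by
  intro r s t a b
  have hM : (0:ℚ) < m^2 - 1 := by nlinarith
  have hMne : (m^2 - 1 : ℚ) ≠ 0 := ne_of_gt hM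
  have hD : (0:ℚ) < (m^2-1)*p^2 - 2*(m-1)^2*p + m^2-1 := h1
  have hDne : ((m^2-1)*p^2 - 2*(m-1)^2*p + m^2-1 : ℚ) ≠ 0 := ne_of_gt hD
  have hpne : (p:ℚ) ≠ 0 := by positivity
  have hp0 : (0:ℚ) < p := by linarith
  have hr : 0 < r := by
    show (0:ℚ) < -((p^2+1)*((m^2-1)*p^2 - 4*(m^2+1)*p + m^2-1)
      /((m^2-1)*p^2 - 2*(m-1)^2*p + m^2-1))
    have h3 : (0:ℚ) < (p^2+1)*(-((m^2-1)*p^2 - 4*(m^2+1)*p + m^2-1)) := by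
      apply mul_pos (by positivity); linarith
    rw [neg_div' ]
    exact div_pos (by linarith [h3]) hD
  refine ⟨hr, 4*p*(m^2+1)/(m^2-1), r + 2*(p^2+1) - 4*p*(m^2+1)/(m^2-1),
    p^2+1, by positivity, ?_, by positivity, ?_, ?_, ?_, ?_⟩
  · -- w₂ ≥ 0
    have key : r + 2*(p^2+1) - 4*p*(m^2+1)/(m^2-1)
        = (m-1)^2 * (m^2*((p-1)^4+4*p^2) + 2*m*(p^2+1)^2 + ((p+1)^4+4*p^2))
          / ((m^2-1) * ((m^2-1)*p^2 - 2*(m-1)^2*p + m^2-1)) := by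
      show -((p^2+1)*((m^2-1)*p^2 - 4*(m^2+1)*p + m^2-1)
        /((m^2-1)*p^2 - 2*(m-1)^2*p + m^2-1)) + 2*(p^2+1) - 4*p*(m^2+1)/(m^2-1) = _
      generalize hX : ((m^2-1)*p^2 - 2*(m-1)^2*p + m^2-1) = D at hDne ⊢
      field_simp
      subst hX
      ring
    rw [key]
    have hm0 : (0:ℚ) < m := by linarith
    positivity
  · -- s² + t² = w₁²
    show (8*m*p/(m^2-1))^2 + (4*p)^2 = _
    field_simp
    ring
  · -- (s−r)² + t² = w₂²
    show (8*m*p/(m^2-1) - -((p^2+1)*((m^2-1)*p^2 - 4*(m^2+1)*p + m^2-1)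
      /((m^2-1)*p^2 - 2*(m-1)^2*p + m^2-1)))^2 + (4*p)^2
      = (-((p^2+1)*((m^2-1)*p^2 - 4*(m^2+1)*p + m^2-1)
      /((m^2-1)*p^2 - 2*(m-1)^2*p + m^2-1)) + 2*(p^2+1) - 4*p*(m^2+1)/(m^2-1))^2
    generalize hX : ((m^2-1)*p^2 - 2*(m-1)^2*p + m^2-1) = D at hDne ⊢
    field_simp
    subst hX
    ring
  · -- w₃ equation
    show (8*m*p/(m^2-1)/(2*(1/2)) + ((m^2-1)*p^2 - 8*m*p - m^2+1)/(4*p*(m^2-1))*(4*p))^2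
      + ((1/2)*(4*p))^2 = (p^2+1)^2
    field_simp
    ring
  · -- perimeter
    show r + 4*p*(m^2+1)/(m^2-1) + (r + 2*(p^2+1) - 4*p*(m^2+1)/(m^2-1))
      = 2*(r/(2*(1/2)) + (p^2+1))
    field_simp
    ring
end
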